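/- The class of Δ⁰_α-piecewise continuous functions on Baire space is closed under composition and contains the identity function. -/

import Mathlib

open Ordinal Set

/-- The additive Borel class `Σ⁰_α` in a topological space:
`Σ⁰_0 = ∅`; for `α ≥ 1`, a set is in `Σ⁰_α` iff it is open or a countable union of
complements of sets in lower classes. -/
def Sigma0 (X : Type) [TopologicalSpace X] (α : Ordinal.{0}) : Set (Set X) :=
  if α = 0 then ∅ else
    {A | IsOpen A ∨ ∃ (f : ℕ → Set X) (g : ℕ → {β : Ordinal // β < α}),
        (∀ n, (f n)ᶜ ∈ Sigma0 X (g n).1) ∧ A = ⋃ n, f n}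
  termination_by α
  decreasing_by exact (g n).2

/-- The ambiguous Borel class `Δ⁰_α`. -/
def Delta0 (X : Type) [TopologicalSpace X] (α : Ordinal.{0}) : Set (Set X) :=
  {A | A ∈ Sigma0 X α ∧ Aᶜ ∈ Sigma0 X α}

/-- Baire space `ℕ^ℕ`. -/
abbrev Baire : Type := ℕ → ℕ

/-- `f` is `Δ⁰_α`-piecewise continuous: there is a countable partition of Baire space
into `Δ⁰_α` sets on each of which `f` is continuous (as a function on the subspace). -/
def PiecewiseContinuous (α : Ordinal.{0}) (f : Baire → Baire) : Prop :=
  ∃ P : ℕ → Set Baire, (∀ n, P n ∈ Delta0 Baire α) ∧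
    (Pairwise (Function.onFun Disjoint P)) ∧ (⋃ n, P n) = Set.univ ∧
    ∀ n, ContinuousOn f (P n)

/-! ### Auxiliary lemmas -/

lemma sigma0_zero (X : Type) [TopologicalSpace X] : Sigma0 X 0 = ∅ := by
  rw [Sigma0]; simp

lemma mem_sigma0_iff {X : Type} [TopologicalSpace X] {α : Ordinal} (hα : α ≠ 0) (A : Set X) :
    A ∈ Sigma0 X α ↔ IsOpen A ∨ ∃ (f : ℕ → Set X) (g : ℕ → {β : Ordinal // β < α}),
        (∀ n, (f n)ᶜ ∈ Sigma0 X (g n).1) ∧ A = ⋃ n, f n := by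
  rw [Sigma0, if_neg hα]; rfl

lemma ne_zero_of_mem_sigma0 {X : Type} [TopologicalSpace X] {α : Ordinal} {A : Set X}
    (h : A ∈ Sigma0 X α) : α ≠ 0 := by
  rintro rfl; rw [sigma0_zero] at h; exact h

lemma isOpen_mem_sigma0 {X : Type} [TopologicalSpace X] {α : Ordinal} (hα : α ≠ 0)
    {A : Set X} (hA : IsOpen A) : A ∈ Sigma0 X α := by
  rw [mem_sigma0_iff hα]; exact Or.inl hA

lemma mem_sigma0_of_iUnion {X : Type} [TopologicalSpace X] {α : Ordinal}
    {f : ℕ → Set X} {g : ℕ → Ordinal} (hg : ∀ n, g n < α)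
    (hf : ∀ n, (f n)ᶜ ∈ Sigma0 X (g n)) : (⋃ n, f n) ∈ Sigma0 X α := by
  have hα : α ≠ 0 := fun h => by subst h; exact absurd (hg 0) (not_lt_zero (a := g 0))
  rw [mem_sigma0_iff hα]
  exact Or.inr ⟨f, fun n => ⟨g n, hg n⟩, hf, rfl⟩

lemma sigma0_mono {X : Type} [TopologicalSpace X] {β γ : Ordinal} (h : β ≤ γ) :
    Sigma0 X β ⊆ Sigma0 X γ := by
  intro A hA
  have hβ : β ≠ 0 := ne_zero_of_mem_sigma0 hA
  have hγ : γ ≠ 0 := fun hh => hβ (le_antisymm (hh ▸ h) (zero_le (a := β)))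
  rw [mem_sigma0_iff hβ] at hA
  rw [mem_sigma0_iff hγ]
  rcases hA with hA | ⟨f, g, hfg, rfl⟩
  · exact Or.inl hA
  · exact Or.inr ⟨f, fun n => ⟨(g n).1, (g n).2.trans_le h⟩, hfg, rfl⟩

lemma sigma0_one_isOpen {X : Type} [TopologicalSpace X] {A : Set X}
    (hA : A ∈ Sigma0 X 1) : IsOpen A := by
  rw [mem_sigma0_iff one_ne_zero] at hA
  rcases hA with hA | ⟨f, g, hfg, rfl⟩
  · exact hA
  · exfalso
    have h0 : (g 0).1 = 0 := Ordinal.lt_one_iff_zero.1 (g 0).2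
    have := hfg 0
    rw [h0, sigma0_zero] at this
    exact this

/-- Normal form in Baire space: for `α ≥ 2` every `Σ⁰_α` set is a countable union of
sets whose complements are in lower classes. -/
lemma sigma0_norm {α : Ordinal} (hα : 2 ≤ α) {A : Set Baire} (hA : A ∈ Sigma0 Baire α) :
    ∃ (f : ℕ → Set Baire) (g : ℕ → Ordinal),
      (∀ n, g n < α) ∧ (∀ n, (f n)ᶜ ∈ Sigma0 Baire (g n)) ∧ A = ⋃ n, f n := by
  have hα0 : α ≠ 0 := by rintro rfl; exact absurd hα (by simp [nonpos_iff_eq_zero])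
  rw [mem_sigma0_iff hα0] at hA
  rcases hA with hA | ⟨f, g, hfg, rfl⟩
  · -- open sets are Fσ in the (metrizable) Baire space
    obtain ⟨U, hUopen, hUeq⟩ := isGδ_iff_eq_iInter_nat.1 (isClosed_compl_iff.2 hA).isGδ
    refine ⟨fun n => (U n)ᶜ, fun _ => 1, fun n => lt_of_lt_of_le one_lt_two hα,
      fun n => ?_, ?_⟩
    · rw [compl_compl]; exact isOpen_mem_sigma0 one_ne_zero (hUopen n)
    · rw [← compl_iInter, ← hUeq, compl_compl]
  · exact ⟨f, fun n => (g n).1, fun n => (g n).2, hfg, rfl⟩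

lemma sigma0_iUnion {α : Ordinal} (hα : α ≠ 0) {A : ℕ → Set Baire}
    (h : ∀ k, A k ∈ Sigma0 Baire α) : (⋃ k, A k) ∈ Sigma0 Baire α := by
  rcases le_or_gt 2 α with h2 | h2
  · choose f g hg hfg hEq using fun k => sigma0_norm h2 (h k)
    let e : ℕ ≃ ℕ × ℕ := (Denumerable.eqv (ℕ × ℕ)).symm
    have key : (⋃ k, A k) = ⋃ m, f (e m).1 (e m).2 := by
      rw [e.surjective.iUnion_comp (fun p : ℕ × ℕ => f p.1 p.2),
        Set.iUnion_prod' (fun p : ℕ × ℕ => f p.1 p.2)]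
      exact iUnion_congr hEq
    rw [key]
    exact mem_sigma0_of_iUnion (g := fun m => g (e m).1 (e m).2)
      (fun m => hg _ _) (fun m => hfg _ _)
  · have h1 : α = 1 := le_antisymm (by
      rwa [← one_add_one_eq_two, Ordinal.add_one_eq_succ, Order.lt_succ_iff] at h2)
      (Ordinal.one_le_iff_ne_zero.2 hα)
    subst h1
    exact isOpen_mem_sigma0 one_ne_zero (isOpen_iUnion fun k => sigma0_one_isOpen (h k))

lemma sigma0_union {α : Ordinal} (hα : α ≠ 0) {A B : Set Baire}
    (hA : A ∈ Sigma0 Baire α) (hB : B ∈ Sigma0 Baire α) : A ∪ B ∈ Sigma0 Baire α := by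
  have : A ∪ B = ⋃ k : ℕ, (if k = 0 then A else B) := by
    ext x
    simp only [mem_union, mem_iUnion]
    constructor
    · rintro (hx | hx)
      · exact ⟨0, by simpa using hx⟩
      · exact ⟨1, by simpa using hx⟩
    · rintro ⟨k, hk⟩
      by_cases h0 : k = 0
      · left; simpa [h0] using hk
      · right; simpa [h0] using hk
  rw [this]
  exact sigma0_iUnion hα fun k => by by_cases h0 : k = 0 <;> simp [h0, hA, hB]

lemma sigma0_inter {α : Ordinal} (hα : α ≠ 0) {A B : Set Baire}
    (hA : A ∈ Sigma0 Baire α) (hB : B ∈ Sigma0 Baire α) : A ∩ B ∈ Sigma0 Baire α := by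
  rcases le_or_gt 2 α with h2 | h2
  · obtain ⟨f, gf, hgf, hff, rfl⟩ := sigma0_norm h2 hA
    obtain ⟨f', gf', hgf', hff', rfl⟩ := sigma0_norm h2 hB
    have key : (⋃ n, f n) ∩ (⋃ m, f' m) = ⋃ p : ℕ × ℕ, f p.1 ∩ f' p.2 := by
      ext x
      simp only [mem_inter_iff, mem_iUnion, Prod.exists]
      constructor
      · rintro ⟨⟨n, hn⟩, ⟨m, hm⟩⟩; exact ⟨n, m, hn, hm⟩
      · rintro ⟨n, m, hn, hm⟩; exact ⟨⟨n, hn⟩, ⟨m, hm⟩⟩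
    rw [key]
    let e : ℕ ≃ ℕ × ℕ := (Denumerable.eqv (ℕ × ℕ)).symm
    rw [← e.surjective.iUnion_comp (fun p : ℕ × ℕ => f p.1 ∩ f' p.2)]
    refine mem_sigma0_of_iUnion (g := fun m => max (gf (e m).1) (gf' (e m).2))
      (fun m => max_lt (hgf _) (hgf' _)) (fun m => ?_)
    rw [compl_inter]
    have h1 : (f (e m).1)ᶜ ∈ Sigma0 Baire (max (gf (e m).1) (gf' (e m).2)) :=
      sigma0_mono (le_max_left _ _) (hff _)
    have h2 : (f' (e m).2)ᶜ ∈ Sigma0 Baire (max (gf (e m).1) (gf' (e m).2)) :=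
      sigma0_mono (le_max_right _ _) (hff' _)
    exact sigma0_union (ne_zero_of_mem_sigma0 h1) h1 h2
  · have h1 : α = 1 := le_antisymm (by
      rwa [← one_add_one_eq_two, Ordinal.add_one_eq_succ, Order.lt_succ_iff] at h2)
      (Ordinal.one_le_iff_ne_zero.2 hα)
    subst h1
    exact isOpen_mem_sigma0 one_ne_zero ((sigma0_one_isOpen hA).inter (sigma0_one_isOpen hB))

lemma sigma0_preimage {X Y : Type} [TopologicalSpace X] [TopologicalSpace Y] {f : X → Y}
    (hf : Continuous f) (α : Ordinal) : ∀ A ∈ Sigma0 Y α, f ⁻¹' A ∈ Sigma0 X α := by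
  induction α using Ordinal.induction with
  | h α IH =>
    intro A hA
    have hα : α ≠ 0 := ne_zero_of_mem_sigma0 hA
    rw [mem_sigma0_iff hα] at hA
    rcases hA with hA | ⟨u, g, hug, rfl⟩
    · exact isOpen_mem_sigma0 hα (hA.preimage hf)
    · rw [preimage_iUnion]
      refine mem_sigma0_of_iUnion (g := fun n => (g n).1) (fun n => (g n).2) (fun n => ?_)
      rw [← preimage_compl]
      exact IH _ (g n).2 _ (hug n)

lemma sigma0_subtype {X : Type} [TopologicalSpace X] {S : Set X} (α : Ordinal) :
    ∀ A ∈ Sigma0 (↥S) α, ∃ B ∈ Sigma0 X α, A = Subtype.val ⁻¹' B := by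
  induction α using Ordinal.induction with
  | h α IH =>
    intro A hA
    have hα : α ≠ 0 := ne_zero_of_mem_sigma0 hA
    rw [mem_sigma0_iff hα] at hA
    rcases hA with hA | ⟨u, g, hug, rfl⟩
    · obtain ⟨U, hU, hUeq⟩ := isOpen_induced_iff.1 hA
      exact ⟨U, isOpen_mem_sigma0 hα hU, hUeq.symm⟩
    · choose B hB hBeq using fun n => IH _ (g n).2 _ (hug n)
      refine ⟨⋃ n, (B n)ᶜ, ?_, ?_⟩
      · exact mem_sigma0_of_iUnion (g := fun n => (g n).1) (fun n => (g n).2)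
          (fun n => by rw [compl_compl]; exact hB n)
      · rw [preimage_iUnion]
        refine iUnion_congr fun n => ?_
        rw [preimage_compl, ← hBeq n, compl_compl]

lemma delta0_inter {α : Ordinal} (hα : α ≠ 0) {A B : Set Baire}
    (hA : A ∈ Delta0 Baire α) (hB : B ∈ Delta0 Baire α) : A ∩ B ∈ Delta0 Baire α := by
  refine ⟨sigma0_inter hα hA.1 hB.1, ?_⟩
  rw [compl_inter]
  exact sigma0_union hα hA.2 hB.2

lemma delta0_piece {α : Ordinal} (hα : α ≠ 0) {f : Baire → Baire} {S Q : Set Baire}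
    (hf : ContinuousOn f S) (hS : S ∈ Delta0 Baire α) (hQ : Q ∈ Delta0 Baire α) :
    S ∩ f ⁻¹' Q ∈ Delta0 Baire α := by
  have hres : Continuous (S.restrict f) := continuousOn_iff_continuous_restrict.1 hf
  obtain ⟨B, hB, hBeq⟩ := sigma0_subtype α (S.restrict f ⁻¹' Q)
    (sigma0_preimage hres α Q hQ.1)
  obtain ⟨B', hB', hBeq'⟩ := sigma0_subtype α (S.restrict f ⁻¹' Qᶜ)
    (sigma0_preimage hres α Qᶜ hQ.2)
  have h1 : S ∩ f ⁻¹' Q = S ∩ B := by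
    ext x
    simp only [mem_inter_iff]
    refine and_congr_right fun hx => ?_
    have := Set.ext_iff.1 hBeq ⟨x, hx⟩
    exact this
  have h2 : S ∩ f ⁻¹' Qᶜ = S ∩ B' := by
    ext x
    simp only [mem_inter_iff]
    refine and_congr_right fun hx => ?_
    have := Set.ext_iff.1 hBeq' ⟨x, hx⟩
    exact this
  constructor
  · rw [h1]; exact sigma0_inter hα hS.1 hB
  · have hc : (S ∩ f ⁻¹' Q)ᶜ = Sᶜ ∪ (S ∩ f ⁻¹' Qᶜ) := by
      ext x; by_cases hx : x ∈ S <;> simp [hx]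
    rw [hc, h2]
    exact sigma0_union hα hS.2 (sigma0_inter hα hS.1 hB')

/-- The class of `Δ⁰_α`-piecewise continuous functions on Baire space contains the
identity function and is closed under composition. -/
theorem piecewiseContinuous_id_and_comp (α : Ordinal.{0}) (hα : 0 < α)
    (hα1 : α < Ordinal.omega 1) :
    PiecewiseContinuous α (id : Baire → Baire) ∧
    (∀ f g : Baire → Baire, PiecewiseContinuous α f → PiecewiseContinuous α g →
      PiecewiseContinuous α (g ∘ f)) := by
  have hα0 : α ≠ 0 := hα.ne'
  constructor
  · refine ⟨fun n => if n = 0 then univ else ∅, fun n => ?_, ?_, ?_, fun n => continuousOn_id⟩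
    · by_cases h0 : n = 0 <;>
        simp only [h0, if_pos, if_neg, ite_true, ite_false] <;>
        exact ⟨isOpen_mem_sigma0 hα0 (by simp), isOpen_mem_sigma0 hα0 (by simp)⟩
    · intro n m hnm
      unfold Function.onFun
      rcases eq_or_ne n 0 with rfl | hn
      · simp [hnm.symm]
      · simp [hn]
    · rw [eq_univ_iff_forall]
      intro x
      exact mem_iUnion.2 ⟨0, by simp⟩
  · rintro f g ⟨P, hPd, hPdisj, hPu, hPc⟩ ⟨Q, hQd, hQdisj, hQu, hQc⟩
    let e : ℕ ≃ ℕ × ℕ := (Denumerable.eqv (ℕ × ℕ)).symm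
    refine ⟨fun k => P (e k).1 ∩ f ⁻¹' Q (e k).2, fun k => ?_, ?_, ?_, fun k => ?_⟩
    · exact delta0_piece hα0 (hPc _) (hPd _) (hQd _)
    · intro k k' hkk'
      have hek : e k ≠ e k' := fun h => hkk' (e.injective h)
      unfold Function.onFun
      rcases eq_or_ne (e k).1 (e k').1 with h1 | h1
      · have h2 : (e k).2 ≠ (e k').2 := fun h => hek (Prod.ext h1 h)
        exact ((hQdisj h2).preimage f).mono inter_subset_right inter_subset_right
      · exact (hPdisj h1).mono inter_subset_left inter_subset_left
    · rw [eq_univ_iff_forall]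
      intro x
      have hx1 : x ∈ ⋃ n, P n := hPu ▸ mem_univ x
      have hx2 : f x ∈ ⋃ n, Q n := hQu ▸ mem_univ (f x)
      obtain ⟨n, hn⟩ := mem_iUnion.1 hx1
      obtain ⟨m, hm⟩ := mem_iUnion.1 hx2
      refine mem_iUnion.2 ⟨e.symm (n, m), ?_⟩
      simp only [Equiv.apply_symm_apply]
      exact ⟨hn, hm⟩
    · refine ContinuousOn.comp (hQc (e k).2) ((hPc (e k).1).mono inter_subset_left) ?_
      exact fun x hx => hx.2
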